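/- Let h11 = (0,0,0,12,13,14+23) and let φ be any automorphism of h11 that is lower triangular in the standard basis. Then the diagonal entry of φ on e3 equals the square of the diagonal entry of φ on e1, i.e. e^3(φ(e3)) = (e^1(φ(e1)))^2. -/
import Mathlib


open Submodule

abbrev V6 : Type := Fin 6 → ℝ

def e (i : Fin 6) : V6 := Pi.single i 1

/-- Bracket of h11 = (0,0,0,12,13,14+23): [e1,e2]=e4, [e1,e3]=e5, [e1,e4]=e6, [e2,e3]=e6. -/
def br (x y : V6) : V6 :=
  ![0, 0, 0, x 0 * y 1 - x 1 * y 0, x 0 * y 2 - x 2 * y 0,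
    x 0 * y 3 - x 3 * y 0 + (x 1 * y 2 - x 2 * y 1)]

theorem h11_aut_diagonal_relation (φ : V6 ≃ₗ[ℝ] V6)
    (haut : ∀ x y, φ (br x y) = br (φ x) (φ y))
    (htri : ∀ j : Fin 6, φ (e j) ∈ span ℝ {v : V6 | ∃ i : Fin 6, j ≤ i ∧ v = e i}) :
    φ (e 2) 2 = (φ (e 0) 0) ^ 2 := by
  -- triangularity in coordinates
  have tri : ∀ j i : Fin 6, i < j → φ (e j) i = 0 := by
    intro j i hij
    have hle : span ℝ {v : V6 | ∃ k : Fin 6, j ≤ k ∧ v = e k} ≤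
        LinearMap.ker (LinearMap.proj i : V6 →ₗ[ℝ] ℝ) := by
      rw [span_le]
      rintro v ⟨k, hk, rfl⟩
      have : i ≠ k := (hij.trans_le hk).ne
      simp [LinearMap.mem_ker, e, Pi.single_apply, this]
    exact hle (htri j)
  -- decomposition
  have hdecomp : ∀ u : V6, φ u = ∑ j, u j • φ (e j) := by
    intro u
    have hu : u = ∑ j, u j • e j := by
      funext k; simp [e, Pi.single_apply, Finset.sum_apply]
    conv_lhs => rw [hu]
    simp [map_sum]
  have ha0 : φ (e 0) 0 ≠ 0 := by
    intro h
    have h1 : φ (φ.symm (e 0)) 0 = 1 := by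
      rw [φ.apply_symm_apply]; simp [e, Pi.single_apply]
    rw [hdecomp] at h1
    simp only [Finset.sum_apply, Pi.smul_apply, smul_eq_mul] at h1
    rw [Fin.sum_univ_six] at h1
    rw [h, tri 1 0 (by decide), tri 2 0 (by decide), tri 3 0 (by decide),
      tri 4 0 (by decide), tri 5 0 (by decide)] at h1
    simp at h1
  have hb1 : φ (e 1) 1 ≠ 0 := by
    intro h
    set u := φ.symm (e 1) with hu
    have h0 : φ u 0 = 0 := by rw [hu, φ.apply_symm_apply]; simp [e, Pi.single_apply]
    have h1 : φ u 1 = 1 := by rw [hu, φ.apply_symm_apply]; simp [e, Pi.single_apply]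
    rw [hdecomp] at h0 h1
    simp only [Finset.sum_apply, Pi.smul_apply, smul_eq_mul] at h0 h1
    rw [Fin.sum_univ_six] at h0 h1
    rw [tri 1 0 (by decide), tri 2 0 (by decide), tri 3 0 (by decide),
      tri 4 0 (by decide), tri 5 0 (by decide)] at h0
    rw [h, tri 2 1 (by decide), tri 3 1 (by decide),
      tri 4 1 (by decide), tri 5 1 (by decide)] at h1
    simp at h0 h1
    have hu0 : u 0 = 0 := by
      rcases h0 with h' | h'
      · exact h'
      · exact absurd h' ha0
    rw [hu0] at h1; simp at h1
  -- bracket identities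
  have hbr1 : br (e 0) (e 1) = e 3 := by
    funext k; fin_cases k <;> simp [br, e, Pi.single_apply] <;> rfl
  have hbr2 : br (e 0) (e 3) = e 5 := by
    funext k; fin_cases k <;> simp [br, e, Pi.single_apply] <;> rfl
  have hbr3 : br (e 1) (e 2) = e 5 := by
    funext k; fin_cases k <;> simp [br, e, Pi.single_apply] <;> rfl
  have h3 : φ (e 3) = br (φ (e 0)) (φ (e 1)) := by rw [← hbr1, haut]
  have h5a : φ (e 5) = br (φ (e 0)) (br (φ (e 0)) (φ (e 1))) := by
    rw [← hbr2, haut, h3]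
  have h5b : φ (e 5) = br (φ (e 1)) (φ (e 2)) := by rw [← hbr3, haut]
  have key : br (φ (e 1)) (φ (e 2)) 5 = br (φ (e 0)) (br (φ (e 0)) (φ (e 1))) 5 := by rw [← h5a, ← h5b]
  have e1 : br (φ (e 1)) (φ (e 2)) 5 = φ (e 1) 1 * φ (e 2) 2 := by
    show φ (e 1) 0 * φ (e 2) 3 - φ (e 1) 3 * φ (e 2) 0 + (φ (e 1) 1 * φ (e 2) 2 - φ (e 1) 2 * φ (e 2) 1) = _
    rw [tri 1 0 (by decide), tri 2 0 (by decide), tri 2 1 (by decide)]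
    ring
  have e2 : br (φ (e 0)) (br (φ (e 0)) (φ (e 1))) 5 = φ (e 0) 0 ^ 2 * φ (e 1) 1 := by
    show φ (e 0) 0 * (φ (e 0) 0 * φ (e 1) 1 - φ (e 0) 1 * φ (e 1) 0) - φ (e 0) 3 * 0 + (φ (e 0) 1 * 0 - φ (e 0) 2 * 0) = _
    rw [tri 1 0 (by decide)]
    ring
  rw [e1, e2] at key
  have : φ (e 1) 1 * φ (e 2) 2 = φ (e 1) 1 * (φ (e 0) 0) ^ 2 := by linarith [key]
  exact mul_left_cancel₀ hb1 this
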